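/- A finite simple graph is chordal if and only if it admits a perfect elimination ordering, i.e., an ordering v₁,...,vₙ of its vertices such that for each i, the set Adj(vᵢ) ∩ {v_{i+1},...,vₙ} induces a clique. -/

import Mathlib

/-!
A perfect elimination ordering leaves no room for a chordless cycle: on a cycle of length at
least 4, the vertex coming first in the ordering has both of its cycle neighbours later, so they
are adjacent, and for a cycle that long this edge is a chord.

Conversely, every nonempty chordal graph has a simplicial vertex (Dirac); putting it first and
ordering the remaining chordal graph recursively gives a perfect elimination ordering. Dirac's
lemma is proved in the stronger form: if `b` has a non-neighbour `a`, some simplicial vertex is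
neither `b` nor adjacent to `b`. Let `A` be the component of `a` after deleting `b` and its
neighbours, and `S` the neighbours of `b` adjacent to `A`. A chordless path through `A` between
two nonadjacent vertices of `S` would close up through `b` to a chordless cycle, so `S` is a
clique. Induction on the smaller graph on `A ∪ S` then produces a simplicial vertex inside `A`,
whose whole neighbourhood lies in `A ∪ S`.
-/

/-- A simple graph is chordal if every cycle of length at least 4 has a chord. -/
def IsChordal {V : Type*} (G : SimpleGraph V) : Prop :=
  ∀ ⦃v : V⦄ (c : G.Walk v v), c.IsCycle → 4 ≤ c.length →
    ∃ u w : V, u ∈ c.support ∧ w ∈ c.support ∧ G.Adj u w ∧ s(u, w) ∉ c.edges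

namespace SimpleGraph

variable {V : Type*} {G : SimpleGraph V}

def IsSimplicial (G : SimpleGraph V) (v : V) : Prop := G.IsClique (G.neighborSet v)

def IsPerfectEliminationOrder {n : ℕ} (G : SimpleGraph V) (σ : Fin n ≃ V) : Prop :=
  ∀ i, G.IsClique {w | G.Adj (σ i) w ∧ i < σ.symm w}

def reachableWithin (G : SimpleGraph V) (W : Set V) (a : V) : Set V :=
  {x | ∃ p : G.Walk a x, ∀ z ∈ p.support, z ∈ W}

section reachableWithin

variable {W : Set V} {a x y : V}

lemma mem_reachableWithin_self (ha : a ∈ W) : a ∈ G.reachableWithin W a :=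
  ⟨.nil, by simpa⟩

lemma reachableWithin_subset : G.reachableWithin W a ⊆ W :=
  fun _ ⟨p, hp⟩ => hp _ p.end_mem_support

lemma mem_reachableWithin_of_adj (hx : x ∈ G.reachableWithin W a) (hy : y ∈ W)
    (hxy : G.Adj x y) : y ∈ G.reachableWithin W a := by
  obtain ⟨p, hp⟩ := hx
  exact ⟨p.concat hxy, by simpa [Walk.support_concat, or_imp, forall_and] using ⟨hp, hy⟩⟩

lemma exists_walk_of_mem_reachableWithin (hx : x ∈ G.reachableWithin W a)
    (hy : y ∈ G.reachableWithin W a) :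
    ∃ p : G.Walk x y, ∀ z ∈ p.support, z ∈ G.reachableWithin W a := by
  classical
  have hmem : ∀ {t} (p : G.Walk a t), (∀ z ∈ p.support, z ∈ W) →
      ∀ z ∈ p.support, z ∈ G.reachableWithin W a := fun p hp z hz =>
    ⟨p.takeUntil z hz, fun w hw => hp w (p.support_takeUntil_subset_support hz hw)⟩
  obtain ⟨p, hp⟩ := hx
  obtain ⟨q, hq⟩ := hy
  refine ⟨p.reverse.append q, fun z hz => ?_⟩
  rw [Walk.mem_support_append_iff, Walk.support_reverse, List.mem_reverse] at hz
  exact hz.elim (hmem p hp z) (hmem q hq z)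

end reachableWithin

lemma exists_not_adj_forall_adj_of_not_isClique {S U : Set V} (hS : G.IsClique S)
    (hSU : S ⊆ U) (hU : ¬G.IsClique U) :
    ∃ a ∈ U, ∃ b ∈ U, a ≠ b ∧ ¬G.Adj b a ∧ ∀ s ∈ S, s ≠ b → G.Adj b s := by
  by_cases h : ∃ s ∈ S, ∃ a ∈ U, a ≠ s ∧ ¬G.Adj s a
  · obtain ⟨s, hs, a, ha, has, hsa⟩ := h
    exact ⟨a, ha, s, hSU hs, has, hsa, fun t ht hts => hS hs ht hts.symm⟩
  · push Not at h
    obtain ⟨a, ha, b, hb, hab, hnadj⟩ : ∃ a ∈ U, ∃ b ∈ U, a ≠ b ∧ ¬G.Adj a b := by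
      simpa [IsClique, Set.Pairwise] using hU
    exact ⟨a, ha, b, hb, hab, fun h' => hnadj h'.symm,
      fun s hs hsb => (h s hs b hb hsb.symm).symm⟩

namespace Walk

lemma IsCycle.mk_snd_penultimate_notMem_edges {u : V} {c : G.Walk u u} (hc : c.IsCycle)
    (hlen : 4 ≤ c.length) : s(c.snd, c.penultimate) ∉ c.edges := by
  have hnil := hc.not_nil
  intro h
  rw [← List.cons_head_tail (List.ne_nil_of_mem h), ← edges_tail, List.mem_cons] at h
  rcases h with h | h
  · rw [head_edges_eq_mk_start_snd, Sym2.eq_iff] at h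
    rcases h with ⟨h, -⟩ | ⟨-, h⟩
    · exact (c.adj_snd hnil).ne h.symm
    · exact (c.adj_penultimate hnil).ne h
  · have h2 := hc.isPath_tail.eq_snd_of_mem_edges h
    simp only [snd, getVert_tail] at h2
    have := hc.getVert_injOn (by simp; omega) (by simp; omega) h2
    omega

section DecidableEq

variable [DecidableEq V]

lemma exists_length_lt_of_isChord_start {u w v : V} {p : G.Walk u v}
    (h : p.IsChord s(u, w)) :
    ∃ q : G.Walk u v, q.length < p.length ∧ q.support ⊆ p.support := by
  obtain ⟨huw, he, -, hw⟩ := isChord_sym2Mk.mp h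
  -- The chord replaces the segment of `p` up to `w`, which has length at least 2.
  have hsplit := congrArg length (p.take_spec hw)
  rw [length_append] at hsplit
  have h0 : (p.takeUntil w hw).length ≠ 0 := fun h => huw.ne (eq_of_length_eq_zero h)
  have h1 : (p.takeUntil w hw).length ≠ 1 := fun h =>
    he <| p.edges_takeUntil_subset_edges hw <| by
      have := (p.takeUntil w hw).mk_start_snd_mem_edges (by simp [← length_eq_zero_iff, h])
      rwa [snd, ← h, getVert_length] at this
  refine ⟨cons huw (p.dropUntil w hw), by rw [length_cons]; omega, ?_⟩
  rw [support_cons, List.cons_subset]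
  exact ⟨p.start_mem_support, p.support_dropUntil_subset_support hw⟩

lemma exists_length_lt_of_isChord {u v : V} {p : G.Walk u v} {e : Sym2 V}
    (h : p.IsChord e) :
    ∃ q : G.Walk u v, q.length < p.length ∧ q.support ⊆ p.support := by
  induction e using Sym2.ind with | h x y => ?_
  induction p with
  | nil =>
    obtain ⟨hxy, -, hx, hy⟩ := isChord_sym2Mk.mp h
    simp_all
  | @cons a b c hab p ih =>
    obtain ⟨hxy, he, hx, hy⟩ := isChord_sym2Mk.mp h
    by_cases hxa : x = a
    · subst hxa
      exact exists_length_lt_of_isChord_start h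
    by_cases hya : y = a
    · subst hya
      exact exists_length_lt_of_isChord_start (Sym2.eq_swap ▸ h)
    simp only [support_cons, List.mem_cons, hxa, hya, false_or, edges_cons] at hx hy he
    obtain ⟨q, hlt, hsub⟩ := ih (isChord_sym2Mk.mpr ⟨hxy, fun h => he (Or.inr h), hx, hy⟩)
    refine ⟨cons hab q, by simpa using hlt, ?_⟩
    simpa using List.subset_cons_of_subset _ hsub

theorem exists_isPath_isChordless_support_subset {u v : V} (p : G.Walk u v) :
    ∃ q : G.Walk u v, q.IsPath ∧ q.IsChordless ∧ q.support ⊆ p.support := by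
  induction hn : p.length using Nat.strong_induction_on generalizing p with | _ n ih => ?_
  by_cases hc : p.bypass.IsChordless
  · exact ⟨p.bypass, p.bypass_isPath, hc, p.support_bypass_subset_support⟩
  obtain ⟨e, he⟩ : ∃ e, p.bypass.IsChord e := by simpa [IsChordless] using hc
  obtain ⟨q, hlt, hsub⟩ := exists_length_lt_of_isChord he
  obtain ⟨r, hr, hrc, hrsub⟩ :=
    ih q.length (hn ▸ hlt.trans_le p.length_bypass_le_length) q rfl
  exact ⟨r, hr, hrc,
    List.Subset.trans hrsub (List.Subset.trans hsub p.support_bypass_subset_support)⟩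

end DecidableEq

end Walk

theorem IsPerfectEliminationOrder.isChordal {n : ℕ} {σ : Fin n ≃ V}
    (hσ : G.IsPerfectEliminationOrder σ) : IsChordal G := by
  classical
  intro v c hc hlen
  obtain ⟨x, hx, hmin⟩ := c.support.toFinset.exists_min_image σ.symm
    ⟨v, List.mem_toFinset.mpr c.start_mem_support⟩
  rw [List.mem_toFinset] at hx
  simp only [List.mem_toFinset] at hmin
  let c' := c.rotate x hx
  have hc' : c'.IsCycle := hc.rotate hx
  have hnil : ¬c'.Nil := hc'.not_nil
  have hsupp : ∀ {y}, y ∈ c'.support ↔ y ∈ c.support := c.mem_support_rotate_iff x hx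
  have hlater : ∀ y ∈ c'.support, y ≠ x → σ.symm x < σ.symm y := fun y hy hyx =>
    (hmin y (hsupp.mp hy)).lt_of_ne (σ.symm.injective.ne hyx.symm)
  have hsnd := c'.adj_snd hnil
  have hpen := c'.adj_penultimate hnil
  refine ⟨c'.snd, c'.penultimate, hsupp.mp (c'.getVert_mem_support 1),
    hsupp.mp (c'.getVert_mem_support _), ?_, fun h => ?_⟩
  · refine hσ (σ.symm x) ?_ ?_ hc'.snd_ne_penultimate
    · exact ⟨by simpa using hsnd, hlater _ (c'.getVert_mem_support 1) hsnd.ne.symm⟩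
    · exact ⟨by simpa using hpen.symm, hlater _ (c'.getVert_mem_support _) hpen.ne⟩
  · exact hc'.mk_snd_penultimate_notMem_edges (by simpa [c'] using hlen)
      ((c.rotate_edges x hx).mem_iff.mpr h)

theorem IsSimplicial.isPerfectEliminationOrder_cons [DecidableEq V] {n : ℕ} {v : V}
    (hv : G.IsSimplicial v) {τ : Fin n ≃ {x // x ≠ v}}
    (hτ : (G.induce {x | x ≠ v}).IsPerfectEliminationOrder τ) :
    G.IsPerfectEliminationOrder
      (((finSuccEquiv n).trans τ.optionCongr).trans (Equiv.optionSubtypeNe v)) := by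
  set σ := ((finSuccEquiv n).trans τ.optionCongr).trans (Equiv.optionSubtypeNe v)
  have hσ_zero : σ 0 = v := rfl
  have hσ_succ : ∀ i, σ i.succ = τ i := fun i => by simp [σ]
  have hσ_symm : ∀ w (hw : w ≠ v), σ.symm w = (τ.symm ⟨w, hw⟩).succ := fun w hw =>
    σ.symm_apply_eq.mpr (by rw [hσ_succ, Equiv.apply_symm_apply])
  intro i
  induction i using Fin.cases with
  | zero => exact hv.subset fun w hw => hw.1
  | succ j =>
    refine (isClique_induce_iff.mp (hτ j)).subset fun w ⟨hadj, hlt⟩ => ?_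
    have hwv : w ≠ v := by
      rintro rfl
      simp [← hσ_zero] at hlt
    refine ⟨⟨w, hwv⟩, ⟨by simpa [hσ_succ] using hadj, ?_⟩, rfl⟩
    simpa [hσ_symm w hwv] using hlt

end SimpleGraph

namespace IsChordal

open SimpleGraph Walk

variable {V : Type*} {G : SimpleGraph V}

theorem of_embedding {W : Type*} {H : SimpleGraph W} (hG : IsChordal G) (f : H ↪g G) :
    IsChordal H := by
  intro v c hc hlen
  obtain ⟨u, w, hu, hw, huw, he⟩ := hG (c.map f.toHom)
    ((isCycle_map_iff_of_injective f.injective).mpr hc) (by simpa using hlen)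
  simp only [Walk.support_map, List.mem_map] at hu hw
  obtain ⟨u, hu, rfl⟩ := hu
  obtain ⟨w, hw, rfl⟩ := hw
  refine ⟨u, w, hu, hw, f.map_adj_iff.mp huw, fun h => he ?_⟩
  rw [edges_map]
  exact List.mem_map_of_mem (f := Sym2.map f) h

theorem adj_of_isChordless (hG : IsChordal G) {s t b : V} {p : G.Walk s t}
    (hp : p.IsPath) (hpc : p.IsChordless) (hbp : b ∉ p.support) (hbs : G.Adj b s)
    (hbt : G.Adj b t) (hb : ∀ z ∈ p.support, G.Adj b z → z = s ∨ z = t) (hst : s ≠ t) :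
    G.Adj s t := by
  by_contra hnst
  have hlen : 2 ≤ p.length := by
    rcases (by omega : p.length = 0 ∨ p.length = 1 ∨ 2 ≤ p.length) with h | h | h
    · exact absurd (eq_of_length_eq_zero h) hst
    · exact absurd (adj_of_length_eq_one h) hnst
    · exact h
  let c := cons hbs (p.concat hbt.symm)
  have hc : c.IsCycle := isCycle_iff_isPath_tail_and_le_length.mpr
    ⟨by simpa [c] using hp.concat hbp hbt.symm, by simp [c]; omega⟩
  have hsupp : ∀ z ∈ c.support, z = b ∨ z ∈ p.support := by
    simp [c, support_concat, or_comm]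
  have hbz : ∀ z ∈ p.support, G.Adj b z → s(b, z) ∈ c.edges := by
    intro z hz hadj
    rcases hb z hz hadj with rfl | rfl <;> simp [c]
  obtain ⟨u, w, hu, hw, huw, he⟩ := hG c hc (by simp [c]; omega)
  rcases hsupp u hu with rfl | hup <;> rcases hsupp w hw with rfl | hwp
  · exact huw.ne rfl
  · exact he (hbz w hwp huw)
  · exact he (Sym2.eq_swap ▸ hbz u hup huw.symm)
  · exact he (by simp [c, hpc.mem_edges hup hwp huw])

theorem isClique_of_forall_not_adj {A : Set V} {b : V} (hG : IsChordal G)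
    (hA : ∀ x ∈ A, x ≠ b ∧ ¬G.Adj b x)
    (hconn : ∀ x ∈ A, ∀ y ∈ A, ∃ p : G.Walk x y, ∀ z ∈ p.support, z ∈ A) :
    G.IsClique {y | G.Adj b y ∧ ∃ x ∈ A, G.Adj x y} := by
  classical
  rintro s ⟨hbs, x, hx, hxs⟩ t ⟨hbt, y, hy, hyt⟩ hst
  obtain ⟨q, hq⟩ := hconn x hx y hy
  obtain ⟨p, hp, hpc, hsub⟩ :=
    (cons hxs.symm (q.concat hyt)).exists_isPath_isChordless_support_subset
  have hpA : ∀ z ∈ p.support, z = s ∨ z = t ∨ z ∈ A := by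
    intro z hz
    have := hsub hz
    simp only [support_cons, support_concat, List.mem_cons, List.mem_append,
      List.not_mem_nil, or_false] at this
    grind
  refine hG.adj_of_isChordless hp hpc (fun hb => ?_) hbs hbt (fun z hz hbz => ?_) hst
  · rcases hpA b hb with h | h | h
    · exact hbs.ne h
    · exact hbt.ne h
    · exact (hA b h).1 rfl
  · exact (hpA z hz).imp_right (Or.resolve_right · fun h => (hA z h).2 hbz)

theorem exists_not_adj_isClique_neighborSet_inter [Finite V] (hG : IsChordal G) {U : Set V}
    {a b : V} (ha : a ∈ U) (hb : b ∈ U) (hab : a ≠ b) (hnadj : ¬G.Adj b a) :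
    ∃ v ∈ U, v ≠ b ∧ ¬G.Adj b v ∧ G.IsClique (G.neighborSet v ∩ U) := by
  induction hn : U.ncard using Nat.strong_induction_on generalizing U a b with | _ n ih => ?_
  set A := G.reachableWithin {z | z ∈ U ∧ z ≠ b ∧ ¬G.Adj b z} a
  set S := {y | y ∈ U ∧ G.Adj b y ∧ ∃ x ∈ A, G.Adj x y}
  have hAW : A ⊆ {z | z ∈ U ∧ z ≠ b ∧ ¬G.Adj b z} := reachableWithin_subset
  have hnbhd : ∀ x ∈ A, G.neighborSet x ∩ U ⊆ A ∪ S := by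
    rintro x hx y ⟨hxy, hyU⟩
    by_cases hby : G.Adj b y
    · exact Or.inr ⟨hyU, hby, x, hx, hxy⟩
    · refine Or.inl (mem_reachableWithin_of_adj hx ⟨hyU, ?_, hby⟩ hxy)
      rintro rfl
      exact (hAW hx).2.2 hxy.symm
  have hS : G.IsClique S := by
    refine (hG.isClique_of_forall_not_adj (A := A) (fun x hx => (hAW hx).2) ?_).subset
      fun y hy => hy.2
    exact fun x hx y hy => exists_walk_of_mem_reachableWithin hx hy
  have hssubset : A ∪ S ⊂ U := by
    refine ⟨Set.union_subset (fun x hx => (hAW hx).1) fun y hy => hy.1, fun h => ?_⟩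
    rcases h hb with hbA | hbS
    · exact (hAW hbA).2.1 rfl
    · exact hbS.2.1.ne rfl
  suffices ∃ v ∈ A, G.IsClique (G.neighborSet v ∩ (A ∪ S)) by
    obtain ⟨v, hv, hcl⟩ := this
    obtain ⟨hvU, hvb, hbv⟩ := hAW hv
    exact ⟨v, hvU, hvb, hbv, hcl.subset (Set.subset_inter Set.inter_subset_left (hnbhd v hv))⟩
  by_cases hcl : G.IsClique (A ∪ S)
  · exact ⟨a, mem_reachableWithin_self ⟨ha, hab, hnadj⟩, hcl.subset Set.inter_subset_right⟩
  -- `b'` is adjacent to all of `S`, so the vertex found, not being adjacent to `b'`, lies in `A`.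
  obtain ⟨a', ha', b', hb', hab', hnadj', hb'S⟩ :=
    exists_not_adj_forall_adj_of_not_isClique hS Set.subset_union_right hcl
  obtain ⟨v, hv, hvb', hb'v, hvcl⟩ :=
    ih _ (hn ▸ Set.ncard_lt_ncard hssubset) ha' hb' hab' hnadj' rfl
  exact ⟨v, hv.resolve_right fun hvS => hb'v (hb'S v hvS hvb'), hvcl⟩

theorem exists_isSimplicial [Finite V] [Nonempty V] (hG : IsChordal G) :
    ∃ v, G.IsSimplicial v := by
  by_cases hcl : G.IsClique Set.univ
  · exact ⟨Classical.arbitrary V, hcl.subset (Set.subset_univ _)⟩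
  obtain ⟨a, b, hab, hnadj⟩ : ∃ a b, a ≠ b ∧ ¬G.Adj a b := by
    simpa [IsClique, Set.Pairwise] using hcl
  obtain ⟨v, -, -, -, hv⟩ := hG.exists_not_adj_isClique_neighborSet_inter (U := Set.univ)
    trivial trivial hab (fun h => hnadj h.symm)
  exact ⟨v, by simpa [IsSimplicial] using hv⟩

theorem exists_isPerfectEliminationOrder [Fintype V] (hG : IsChordal G) :
    ∃ σ : Fin (Fintype.card V) ≃ V, G.IsPerfectEliminationOrder σ := by
  classical
  induction hn : Fintype.card V generalizing V with
  | zero =>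
    have : IsEmpty V := Fintype.card_eq_zero_iff.mp hn
    exact ⟨Equiv.equivOfIsEmpty _ _, fun i => i.elim0⟩
  | succ n ih =>
    have : Nonempty V := Fintype.card_pos_iff.mp (by omega)
    obtain ⟨v, hv⟩ := hG.exists_isSimplicial
    have hcard : Fintype.card {x // x ≠ v} = n := by simp [hn]
    obtain ⟨τ, hτ⟩ := ih (hG.of_embedding (Embedding.induce {x | x ≠ v})) hcard
    exact ⟨_, hv.isPerfectEliminationOrder_cons hτ⟩

end IsChordal

/-- Fulkerson–Gross: a finite simple graph is chordal iff it has a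
perfect elimination ordering: an ordering `σ` of the vertices such that for each
`i`, the later neighbors of `σ i` form a clique. -/
theorem chordal_iff_perfect_elimination_ordering {V : Type*} [Fintype V]
    (G : SimpleGraph V) :
    IsChordal G ↔ ∃ σ : Fin (Fintype.card V) ≃ V,
      ∀ i : Fin (Fintype.card V),
        G.IsClique {w : V | G.Adj (σ i) w ∧ i < σ.symm w} :=
  ⟨IsChordal.exists_isPerfectEliminationOrder, fun ⟨_, hσ⟩ =>
    SimpleGraph.IsPerfectEliminationOrder.isChordal hσ⟩
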